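/- If strictly more than half of the leaves of a 1-fault NAND tree of depth n have value 0, then the root has value 0 if n is even and value 1 if n is odd. -/

import Mathlib

/-- A complete binary NAND tree of depth `n`: leaves hold bits, each internal
node's value is the NAND of its children's values. -/
inductive NandTree : ℕ → Type where
  | leaf : Bool → NandTree 0
  | node {n : ℕ} : NandTree n → NandTree n → NandTree (n + 1)

/-- The value of (the root of) a NAND tree. -/
def NandTree.val : ∀ {n : ℕ}, NandTree n → Bool
  | _, .leaf b => b
  | _, .node l r => !(l.val && r.val)

/-- The list of leaf values, in left-to-right order. -/
def NandTree.leaves : ∀ {n : ℕ}, NandTree n → List Bool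
  | _, .leaf b => [b]
  | _, .node l r => l.leaves ++ r.leaves

/-- The tree contains no fault nodes: every internal node's two children
have equal values. -/
def NandTree.noFault : ∀ {n : ℕ}, NandTree n → Prop
  | _, .leaf _ => True
  | _, .node l r => l.val = r.val ∧ l.noFault ∧ r.noFault

/-- The quantity κ: 0 at leaves; at a trivial node, the max of the children's κ;
at a fault node, 1 plus the κ of the 0-valued child. -/
def NandTree.kappa : ∀ {n : ℕ}, NandTree n → ℕ
  | _, .leaf _ => 0
  | _, .node l r =>
      if l.val = r.val then max l.kappa r.kappa
      else if l.val = false then 1 + l.kappa else 1 + r.kappa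

/-- The 1-fault condition: κ(v) ≤ 1 at every node of the tree. -/
def NandTree.oneFault : ∀ {n : ℕ}, NandTree n → Prop
  | _, .leaf _ => True
  | _, .node l r => (NandTree.node l r).kappa ≤ 1 ∧ l.oneFault ∧ r.oneFault

/-!
It suffices to show that a 1-fault tree whose root value differs from the parity of its depth
has at most half of its leaves equal to 0. In a fault-free tree the values alternate level by
level, so all its leaves equal the root value xor the parity of the depth. At a trivial node
both children again have the wrong value, so induction applies to each. At a fault node the
root value is 1, so the depth of the children is odd; the 0-valued child has κ = 0, hence is
fault-free and all its leaves are 1, while the other child contributes at most its size.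
-/

theorem Nat.decide_mod_two_eq_one (n : ℕ) : decide (n % 2 = 1) = n.bodd := by
  cases h : n.bodd <;> simp [Nat.mod_two_of_bodd, h]

namespace NandTree

theorem length_leaves : ∀ {n : ℕ} (t : NandTree n), t.leaves.length = 2 ^ n
  | _, .leaf _ => rfl
  | _, .node l r => by
    rw [leaves, List.length_append, length_leaves l, length_leaves r, pow_succ, mul_two]

theorem count_false_le {n : ℕ} (t : NandTree n) : t.leaves.count false ≤ 2 ^ n :=
  t.length_leaves ▸ List.count_le_length

theorem noFault_of_kappa_eq_zero : ∀ {n : ℕ} {t : NandTree n}, t.kappa = 0 → t.noFault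
  | _, .leaf _, _ => trivial
  | _, .node l r, h => by
    by_cases hlr : l.val = r.val
    · simp only [kappa, if_pos hlr, Nat.max_eq_zero_iff] at h
      exact ⟨hlr, noFault_of_kappa_eq_zero h.1, noFault_of_kappa_eq_zero h.2⟩
    · simp only [kappa, if_neg hlr] at h
      split at h <;> omega

theorem noFault_of_kappa_node_le_one {n : ℕ} {l r : NandTree n} (hk : (node l r).kappa ≤ 1)
    (hlr : l.val ≠ r.val) : (l.val = false → l.noFault) ∧ (r.val = false → r.noFault) := by
  constructor <;> intro hv <;> apply noFault_of_kappa_eq_zero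
  · simp only [kappa, if_neg hlr, if_pos hv] at hk
    omega
  · have hl : l.val ≠ false := by rwa [hv] at hlr
    simp only [kappa, if_neg hlr, if_neg hl] at hk
    omega

theorem leaves_eq_replicate_of_noFault : ∀ {n : ℕ} {t : NandTree n}, t.noFault →
    t.leaves = List.replicate (2 ^ n) (t.val ^^ n.bodd)
  | _, .leaf _, _ => by simp [leaves, val]
  | _, .node l r, h => by
    obtain ⟨hlr, hl, hr⟩ := h
    rw [leaves, leaves_eq_replicate_of_noFault hl, leaves_eq_replicate_of_noFault hr,
      hlr, ← List.replicate_add]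
    congr 1
    · ring
    · simp [val, hlr, Nat.bodd_succ]

theorem count_false_eq_zero_of_noFault {n : ℕ} {t : NandTree n} (ht : t.noFault)
    (hv : t.val = false) (hn : n.bodd = true) : t.leaves.count false = 0 := by
  simp [leaves_eq_replicate_of_noFault ht, hv, hn, List.count_replicate]

theorem two_mul_count_false_le_of_val_eq_not_bodd : ∀ {n : ℕ} {t : NandTree n}, t.oneFault →
    t.val = !n.bodd → 2 * t.leaves.count false ≤ 2 ^ n
  | _, .leaf _, _, hv => by simp_all [leaves, val]
  | n + 1, .node l r, ⟨hk, hl, hr⟩, hv => by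
    rw [leaves, List.count_append, pow_succ]
    by_cases hlr : l.val = r.val
    · have hlv : l.val = !n.bodd := by
        simpa [val, hlr, Nat.bodd_succ] using hv
      have hcl := two_mul_count_false_le_of_val_eq_not_bodd hl hlv
      have hcr := two_mul_count_false_le_of_val_eq_not_bodd hr (hlr ▸ hlv)
      omega
    · have hn : n.bodd = true := by
        have hnand : (l.val && r.val) = false := by
          cases hlv : l.val <;> simp_all
        simpa [val, hnand, Nat.bodd_succ] using hv
      obtain ⟨hl0, hr0⟩ := noFault_of_kappa_node_le_one hk hlr
      cases hlv : l.val
      · have hcl := count_false_eq_zero_of_noFault (hl0 hlv) hlv hn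
        have hcr := r.count_false_le
        omega
      · have hrv : r.val = false := by simpa [hlv] using Ne.symm hlr
        have hcr := count_false_eq_zero_of_noFault (hr0 hrv) hrv hn
        have hcl := l.count_false_le
        omega

end NandTree

/-- If strictly more than half of the leaves of a 1-fault NAND tree of
depth n have value 0, the root has value 0 for even n and 1 for odd n. -/
theorem oneFault_majority_false {n : ℕ} (t : NandTree n) (h1 : t.oneFault)
    (hmaj : 2 ^ n < 2 * t.leaves.count false) :
    t.val = decide (n % 2 = 1) := by
  rw [Nat.decide_mod_two_eq_one]
  by_contra hv
  have hcount := t.two_mul_count_false_le_of_val_eq_not_bodd h1 (Bool.eq_not_iff.mpr hv)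
  omega
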